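/- arXiv:2210.10387 — 5 statements merged into one kernel-verified Lean document; each statement's English description precedes it below -/
import Mathlib

section
/- Let A be a dually pseudocomplemented Heyting algebra and a, b ∈ A. With β := (a ∨ a*)⁺, one has (a → b) ∨ β = (a → b) ∨ a⁺. -/
/-! The inequality `≤` holds because `⁺` is antitone and `a ≤ a ∨ a*`. For `≥`, the defining
property `x ∨ x⁺ = 1` at `x = a ∨ a*` gives `a⁺ ≤ a* ∨ (a ∨ a*)⁺`, and `a* ≤ a → b`. -/

section DualPseudocomplement

variable {α : Type*} [SemilatticeSup α] [OrderTop α] {p : α → α}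

theorem dualPseudocompl_antitone (hp : ∀ x, x ⊔ p x = ⊤)
    (hleast : ∀ x z, x ⊔ z = ⊤ → p x ≤ z) : Antitone p := fun x y hxy =>
  hleast y (p x) (top_unique ((hp x).ge.trans (sup_le_sup_right hxy (p x))))

theorem dualPseudocompl_le_sup_dualPseudocompl_sup (hp : ∀ x, x ⊔ p x = ⊤)
    (hleast : ∀ x z, x ⊔ z = ⊤ → p x ≤ z) (x c : α) : p x ≤ c ⊔ p (x ⊔ c) :=
  hleast x _ (by rw [← sup_assoc, hp])

end DualPseudocomplement

theorem stmt9 (A : Type*) [HeytingAlgebra A] (p : A → A)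
    (hp : ∀ x, x ⊔ p x = ⊤) (hleast : ∀ x z, x ⊔ z = ⊤ → p x ≤ z)
    (a b : A) : (a ⇨ b) ⊔ p (a ⊔ (a ⇨ (⊥ : A))) = (a ⇨ b) ⊔ p a := by
  apply le_antisymm
  · exact sup_le_sup_left (dualPseudocompl_antitone hp hleast le_sup_left) _
  · refine sup_le le_sup_left ?_
    calc p a ≤ (a ⇨ ⊥) ⊔ p (a ⊔ (a ⇨ ⊥)) :=
          dualPseudocompl_le_sup_dualPseudocompl_sup hp hleast a _
      _ ≤ (a ⇨ b) ⊔ p (a ⊔ (a ⇨ ⊥)) := sup_le_sup_right (himp_le_himp_left bot_le) _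
end

section
/- Let A be a dually pseudocomplemented Heyting algebra, a, b ∈ A, and α := (a* ∨ b**)**. Then α ∨ (a → b)⁺ = 1. -/
theorem stmt13 (A : Type*) [HeytingAlgebra A] (p : A → A)
    (hp : ∀ x, x ⊔ p x = ⊤) (hleast : ∀ x z, x ⊔ z = ⊤ → p x ≤ z)
    (a b : A) :
    ((((a ⇨ (⊥ : A)) ⊔ ((b ⇨ (⊥ : A)) ⇨ (⊥ : A))) ⇨ (⊥ : A)) ⇨ (⊥ : A)) ⊔ p (a ⇨ b) = ⊤ := by
  have key : a ⇨ b ≤ (((a ⇨ (⊥ : A)) ⊔ ((b ⇨ (⊥ : A)) ⇨ (⊥ : A))) ⇨ (⊥ : A)) ⇨ (⊥ : A) := by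
    simp only [himp_bot]
    rw [le_compl_iff_disjoint_right, disjoint_iff_inf_le]
    have hc1 : ((aᶜ ⊔ bᶜᶜ)ᶜ : A) ≤ aᶜᶜ := compl_le_compl le_sup_left
    have hc2 : ((aᶜ ⊔ bᶜᶜ)ᶜ : A) ≤ bᶜ := by
      have := compl_le_compl (le_sup_right : (bᶜᶜ : A) ≤ aᶜ ⊔ bᶜᶜ)
      simpa using this
    have hab : (a ⇨ b) ⊓ bᶜ ≤ aᶜ := by
      rw [le_compl_iff_disjoint_right, disjoint_iff_inf_le]
      calc (a ⇨ b) ⊓ bᶜ ⊓ a ≤ b ⊓ bᶜ := by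
            refine le_inf ?_ (inf_le_left.trans inf_le_right)
            exact (inf_le_inf_right a inf_le_left).trans (himp_inf_le : (a ⇨ b) ⊓ a ≤ b)
        _ ≤ ⊥ := by simp
    calc (a ⇨ b) ⊓ (aᶜ ⊔ bᶜᶜ)ᶜ ≤ ((a ⇨ b) ⊓ bᶜ) ⊓ aᶜᶜ := by
          refine le_inf (le_inf inf_le_left (inf_le_right.trans hc2)) (inf_le_right.trans hc1)
      _ ≤ aᶜ ⊓ aᶜᶜ := inf_le_inf_right _ hab
      _ ≤ ⊥ := by simp
  rw [eq_top_iff, ← hp (a ⇨ b)]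
  exact sup_le_sup_right key _
end

section
/- Let A be a dually pseudocomplemented Heyting algebra, a, b ∈ A, β := (a ∨ a*)⁺ and γ := a* ∨ b ∨ b*. Then (a → b)⁺ ∨ β ∨ γ = 1. -/
/-! Meeting `(a → b) ∨ (a → b)⁺ = 1` with `(a ∨ a*) ∨ β = 1` and distributing, every term lies below
one of the three joinands except `(a → b) ∧ (a ∨ a*)`, which modus ponens puts below `a* ∨ b`. -/

theorem sup_sup_eq_top_of_inf_le {α : Type*} [DistribLattice α] [OrderTop α] {x x' y y' z : α}
    (hx : x ⊔ x' = ⊤) (hy : y ⊔ y' = ⊤) (h : x ⊓ y ≤ z) : x' ⊔ y' ⊔ z = ⊤ := by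
  have hx' : Codisjoint x (x' ⊔ y') := (codisjoint_iff.2 hx).mono_right le_sup_left
  have hy' : Codisjoint y (x' ⊔ y') := (codisjoint_iff.2 hy).mono_right le_sup_right
  rw [sup_comm]
  exact codisjoint_iff.1 ((hx'.inf_left hy').mono_left h)

theorem himp_inf_sup_himp_bot_le {α : Type*} [HeytingAlgebra α] (a b : α) :
    (a ⇨ b) ⊓ (a ⊔ (a ⇨ ⊥)) ≤ (a ⇨ ⊥) ⊔ b := by
  rw [inf_sup_left]
  exact sup_le (le_sup_of_le_right himp_inf_le) (le_sup_of_le_left inf_le_right)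

theorem stmt14_general (A : Type*) [HeytingAlgebra A] (p : A → A)
    (hp : ∀ x, x ⊔ p x = ⊤)
    (a b : A) :
    p (a ⇨ b) ⊔ p (a ⊔ (a ⇨ (⊥ : A))) ⊔ ((a ⇨ (⊥ : A)) ⊔ b ⊔ (b ⇨ (⊥ : A))) = ⊤ :=
  sup_sup_eq_top_of_inf_le (hp _) (hp _)
    ((himp_inf_sup_himp_bot_le a b).trans le_sup_left)

theorem stmt14 (A : Type*) [HeytingAlgebra A] (p : A → A)
    (hp : ∀ x, x ⊔ p x = ⊤) (hleast : ∀ x z, x ⊔ z = ⊤ → p x ≤ z)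
    (a b : A) :
    p (a ⇨ b) ⊔ p (a ⊔ (a ⇨ (⊥ : A))) ⊔ ((a ⇨ (⊥ : A)) ⊔ b ⊔ (b ⇨ (⊥ : A))) = ⊤ :=
  stmt14_general A p hp a b
end

section
/- Let A be a dually pseudocomplemented Heyting algebra, a, b ∈ A, α := (a* ∨ b**)**, β := (a ∨ a*)⁺, γ := a* ∨ b ∨ b*. Then (a → b)* = (α ∧ (β ∨ γ))*. -/
/-! Since `x* = x***` and `**` preserves meets, meeting with a dense element (one with `x* = 0`)
does not change the pseudocomplement. As `γ ≥ b ∨ b*` is dense, so is `β ∨ γ`, and both sides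
reduce to `a** ∧ b*`. -/

section HeytingAlgebra

variable {α : Type*} [HeytingAlgebra α]

theorem compl_himp_eq_compl_compl_inf_compl (a b : α) : (a ⇨ b)ᶜ = aᶜᶜ ⊓ bᶜ := by
  refine le_antisymm (le_inf (compl_anti compl_le_himp) (compl_anti le_himp)) ?_
  rw [le_compl_iff_disjoint_right, disjoint_assoc, ← le_compl_iff_disjoint_left,
    compl_compl_compl, le_compl_iff_disjoint_right, disjoint_assoc, himp_inf_self]
  exact disjoint_compl_left.mono_right inf_le_left

theorem compl_inf_of_compl_eq_bot {u v : α} (hv : vᶜ = ⊥) : (u ⊓ v)ᶜ = uᶜ := by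
  rw [← compl_compl_compl (u ⊓ v), compl_compl_inf_distrib, hv, compl_bot, inf_top_eq,
    compl_compl_compl]

theorem compl_eq_bot_of_sup_compl_le {b x : α} (h : b ⊔ bᶜ ≤ x) : xᶜ = ⊥ :=
  le_bot_iff.1 <| (compl_anti h).trans <| by rw [compl_sup, inf_compl_self]

end HeytingAlgebra

theorem stmt16_general (A : Type*) [HeytingAlgebra A] (p : A → A)
    (a b : A) :
    (a ⇨ b) ⇨ (⊥ : A) =
      ((((((a ⇨ (⊥ : A)) ⊔ ((b ⇨ (⊥ : A)) ⇨ (⊥ : A))) ⇨ (⊥ : A)) ⇨ (⊥ : A)) ⊓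
        (p (a ⊔ (a ⇨ (⊥ : A))) ⊔ ((a ⇨ (⊥ : A)) ⊔ b ⊔ (b ⇨ (⊥ : A))))) ⇨ (⊥ : A)) := by
  simp only [himp_bot]
  have hdense : (p (a ⊔ aᶜ) ⊔ (aᶜ ⊔ b ⊔ bᶜ))ᶜ = ⊥ :=
    compl_eq_bot_of_sup_compl_le <| le_sup_of_le_right <| sup_le_sup_right le_sup_right _
  rw [compl_inf_of_compl_eq_bot hdense, compl_compl_compl, compl_sup, compl_compl_compl,
    compl_himp_eq_compl_compl_inf_compl]

theorem stmt16 (A : Type*) [HeytingAlgebra A] (p : A → A)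
    (hp : ∀ x, x ⊔ p x = ⊤) (hleast : ∀ x z, x ⊔ z = ⊤ → p x ≤ z)
    (a b : A) :
    (a ⇨ b) ⇨ (⊥ : A) =
      ((((((a ⇨ (⊥ : A)) ⊔ ((b ⇨ (⊥ : A)) ⇨ (⊥ : A))) ⇨ (⊥ : A)) ⇨ (⊥ : A)) ⊓
        (p (a ⊔ (a ⇨ (⊥ : A))) ⊔ ((a ⇨ (⊥ : A)) ⊔ b ⊔ (b ⇨ (⊥ : A))))) ⇨ (⊥ : A)) :=
  stmt16_general A p a b
end

section
/- Let A be a regular dually pseudocomplemented Heyting algebra. Then for all x, y ∈ A, x → y = (x* ∨ y**)** ∧ ((x ∨ x*)⁺ ∨ x* ∨ y ∨ y*), i.e., the Heyting implication is given by Katriňák's term. -/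
/-!
Write `x⁺` for the dual pseudocomplement. Regularity forces `u ⊓ u⁺ ≤ t ⊔ tᶜ` for all `u`, `t`:
`(u ⊓ u⁺) ⊔ (t ⊔ tᶜ)` and `t ⊔ tᶜ` are both dense and have the same dual pseudocomplement,
so they coincide. Now `(xᶜ ⊔ yᶜᶜ)ᶜᶜ = (x ⇨ y)ᶜᶜ`, so the right-hand side lies above `x ⇨ y`
(split it along `(x ⊔ xᶜ) ⊔ (x ⊔ xᶜ)⁺ = ⊤`). Conversely, meeting the right-hand side with `x` lands
below `y ⊔ yᶜ` by the inequality above, and below `yᶜᶜ` because `(x ⇨ y)ᶜᶜ ⊓ x ≤ yᶜᶜ`; these two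
bounds together give `y`.
-/

section HeytingAlgebra

variable {α : Type*} [HeytingAlgebra α]

theorem compl_compl_compl_sup_compl_compl (a b : α) : (aᶜ ⊔ bᶜᶜ)ᶜᶜ = (a ⇨ b)ᶜᶜ := by
  rw [compl_sup, compl_compl_compl, compl_himp_eq_compl_compl_inf_compl]

theorem compl_compl_himp_inf_le (a b : α) : (a ⇨ b)ᶜᶜ ⊓ a ≤ bᶜᶜ := by
  rw [compl_compl_himp_distrib]
  exact (inf_le_inf_left _ le_compl_compl).trans himp_inf_le

theorem le_of_le_sup_compl_of_le_compl_compl {a b : α} (h : a ≤ b ⊔ bᶜ) (h' : a ≤ bᶜᶜ) : a ≤ b :=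
  Disjoint.left_le_of_le_sup_right h (disjoint_compl_left.mono_left h')

end HeytingAlgebra

def IsDualPseudocompl {α : Type*} [HeytingAlgebra α] (p : α → α) : Prop :=
  ∀ x z, p x ≤ z ↔ x ⊔ z = ⊤

namespace IsDualPseudocompl

variable {α : Type*} [HeytingAlgebra α] {p : α → α}

theorem sup_self (hp : IsDualPseudocompl p) (x : α) : x ⊔ p x = ⊤ :=
  (hp x _).1 le_rfl

theorem antitone (hp : IsDualPseudocompl p) : Antitone p := fun a b hab =>
  (hp b _).2 <| top_le_iff.1 <| hp.sup_self a ▸ sup_le_sup_right hab _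

theorem inf_self_sup (hp : IsDualPseudocompl p) (u d : α) : p (u ⊓ p u ⊔ d) = p d := by
  refine le_antisymm (hp.antitone le_sup_right) ((hp d _).2 ?_)
  have htop : (u ⊔ (d ⊔ p (u ⊓ p u ⊔ d))) ⊓ (p u ⊔ (d ⊔ p (u ⊓ p u ⊔ d))) = ⊤ := by
    rw [← sup_inf_right, ← sup_assoc, hp.sup_self]
  have hu : p u ≤ d ⊔ p (u ⊓ p u ⊔ d) := (hp u _).2 (eq_top_iff.2 (htop ▸ inf_le_left))
  exact eq_top_iff.2 (htop ▸ inf_le_right.trans (sup_le hu le_rfl))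

theorem inf_self_le_sup_compl (hp : IsDualPseudocompl p)
    (hreg : ∀ x y : α, xᶜ = yᶜ → p x = p y → x = y) (u t : α) : u ⊓ p u ≤ t ⊔ tᶜ := by
  have hdense : (t ⊔ tᶜ)ᶜ = ⊥ := by rw [compl_sup, inf_compl_self]
  have hdense' : (u ⊓ p u ⊔ (t ⊔ tᶜ))ᶜ = ⊥ := by rw [compl_sup, hdense, inf_bot_eq]
  exact le_sup_left.trans_eq (hreg _ _ (hdense'.trans hdense.symm) (hp.inf_self_sup u _))

theorem himp_le (hp : IsDualPseudocompl p) (x y : α) :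
    x ⇨ y ≤ p (x ⊔ xᶜ) ⊔ xᶜ ⊔ y ⊔ yᶜ := by
  calc x ⇨ y = (x ⇨ y) ⊓ (p (x ⊔ xᶜ) ⊔ xᶜ ⊔ x) := by
        rw [sup_assoc, sup_comm xᶜ, sup_comm, hp.sup_self, inf_top_eq]
    _ ≤ p (x ⊔ xᶜ) ⊔ xᶜ ⊔ y := by
        rw [inf_sup_left, inf_sup_left]
        exact sup_le_sup (sup_le_sup inf_le_right inf_le_right) himp_inf_le
    _ ≤ p (x ⊔ xᶜ) ⊔ xᶜ ⊔ y ⊔ yᶜ := le_sup_left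

theorem inf_le_sup_compl (hp : IsDualPseudocompl p)
    (hreg : ∀ x y : α, xᶜ = yᶜ → p x = p y → x = y) (x y : α) :
    (p (x ⊔ xᶜ) ⊔ xᶜ ⊔ y ⊔ yᶜ) ⊓ x ≤ y ⊔ yᶜ := by
  have hx : x ⊓ p (x ⊔ xᶜ) ≤ y ⊔ yᶜ :=
    (inf_le_inf_right _ le_sup_left).trans (hp.inf_self_le_sup_compl hreg _ y)
  rw [inf_comm]
  simp only [inf_sup_left, inf_compl_self, sup_bot_eq]
  exact sup_le (sup_le hx (inf_le_right.trans le_sup_left)) (inf_le_right.trans le_sup_right)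

end IsDualPseudocompl

theorem stmt18 (A : Type*) [HeytingAlgebra A] (p : A → A)
    (hp : ∀ x, x ⊔ p x = ⊤) (hleast : ∀ x z, x ⊔ z = ⊤ → p x ≤ z)
    (hreg : ∀ x y : A, x ⇨ (⊥ : A) = y ⇨ (⊥ : A) → p x = p y → x = y)
    (x y : A) :
    x ⇨ y =
      (((((x ⇨ (⊥ : A)) ⊔ ((y ⇨ (⊥ : A)) ⇨ (⊥ : A))) ⇨ (⊥ : A)) ⇨ (⊥ : A)) ⊓
        (p (x ⊔ (x ⇨ (⊥ : A))) ⊔ (x ⇨ (⊥ : A)) ⊔ y ⊔ (y ⇨ (⊥ : A)))) := by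
  have hdp : IsDualPseudocompl p := fun x z =>
    ⟨fun h => top_le_iff.1 (hp x ▸ sup_le_sup_left h x), hleast x z⟩
  simp only [himp_bot] at hreg ⊢
  rw [compl_compl_compl_sup_compl_compl]
  refine le_antisymm (le_inf le_compl_compl (hdp.himp_le x y)) ?_
  rw [le_himp_iff]
  apply le_of_le_sup_compl_of_le_compl_compl
  · exact (inf_le_inf_right x inf_le_right).trans (hdp.inf_le_sup_compl hreg x y)
  · exact (inf_le_inf_right x inf_le_left).trans (compl_compl_himp_inf_le x y)
end
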